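/- arXiv:2011.05921 — 4 statements merged into one kernel-verified Lean document; each statement's English description precedes it below -/
import Mathlib

section
/- If A is an m×n matrix with entries in {-1,0,1} such that the map x ↦ Ax is injective on binary vectors x ∈ {0,1}^n, then the (2m)×(2n+m) block matrix [[A, A, I],[A, -A, 0]] (where I is the m×m identity and 0 the m×m zero matrix) is also injective on binary vectors in {0,1}^(2n+m). -/
/-!
Split a binary vector into its three blocks `x₁, x₂, x₃`. The two block rows give
`A x₁ + A x₂ + x₃` and `A x₁ - A x₂`; their sum `2 A x₁ + x₃` determines the bit vector `x₃` by
parity, hence `A x₁`, hence `A x₂`, and injectivity of `A` on binary vectors recovers `x₁` and `x₂`.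
-/

open Matrix

lemma fromBlocks_fromCols_mulVec_sumElim {R m n : Type*} [Ring R] [Fintype m] [Fintype n]
    [DecidableEq m] (A : Matrix m n R) (x₁ x₂ : n → R) (x₃ : m → R) :
    fromBlocks (fromCols A A) 1 (fromCols A (-A)) 0 *ᵥ Sum.elim (Sum.elim x₁ x₂) x₃ =
      Sum.elim (A *ᵥ x₁ + A *ᵥ x₂ + x₃) (A *ᵥ x₁ - A *ᵥ x₂) := by
  simp [fromBlocks_mulVec, neg_mulVec, sub_eq_add_neg]

lemma Int.eq_of_add_add_eq_of_sub_eq {a b c a' b' c' : ℤ} (hc : c = 0 ∨ c = 1)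
    (hc' : c' = 0 ∨ c' = 1) (hsum : a + b + c = a' + b' + c') (hdiff : a - b = a' - b') :
    a = a' ∧ b = b' ∧ c = c' := by
  omega

lemma eq_of_sumElim_add_add_eq_sumElim_sub_eq {m : Type*} {u v w u' v' w' : m → ℤ}
    (hw : ∀ i, w i = 0 ∨ w i = 1) (hw' : ∀ i, w' i = 0 ∨ w' i = 1)
    (h : Sum.elim (u + v + w) (u - v) = Sum.elim (u' + v' + w') (u' - v')) :
    u = u' ∧ v = v' ∧ w = w' := by
  have key i := Int.eq_of_add_add_eq_of_sub_eq (hw i) (hw' i)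
    (congrFun h (Sum.inl i)) (congrFun h (Sum.inr i))
  exact ⟨funext fun i ↦ (key i).1, funext fun i ↦ (key i).2.1, funext fun i ↦ (key i).2.2⟩

theorem block_matrix_identification_general (m n : ℕ) (A : Matrix (Fin m) (Fin n) ℤ)
    (hinj : ∀ x y : Fin n → ℤ, (∀ j, x j = 0 ∨ x j = 1) → (∀ j, y j = 0 ∨ y j = 1) →
      A.mulVec x = A.mulVec y → x = y) :
    ∀ x y : (Fin n ⊕ Fin n) ⊕ Fin m → ℤ,
      (∀ j, x j = 0 ∨ x j = 1) → (∀ j, y j = 0 ∨ y j = 1) →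
      (Matrix.fromBlocks (Matrix.fromCols A A) (1 : Matrix (Fin m) (Fin m) ℤ)
        (Matrix.fromCols A (-A)) (0 : Matrix (Fin m) (Fin m) ℤ)).mulVec x =
      (Matrix.fromBlocks (Matrix.fromCols A A) (1 : Matrix (Fin m) (Fin m) ℤ)
        (Matrix.fromCols A (-A)) (0 : Matrix (Fin m) (Fin m) ℤ)).mulVec y →
      x = y := by
  intro x y hx hy h
  rw [← Sum.elim_comp_inl_inr x, ← Sum.elim_comp_inl_inr (x ∘ Sum.inl),
    ← Sum.elim_comp_inl_inr y, ← Sum.elim_comp_inl_inr (y ∘ Sum.inl)] at h ⊢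
  rw [fromBlocks_fromCols_mulVec_sumElim, fromBlocks_fromCols_mulVec_sumElim] at h
  obtain ⟨h₁, h₂, h₃⟩ :=
    eq_of_sumElim_add_add_eq_sumElim_sub_eq (fun i ↦ hx _) (fun i ↦ hy _) h
  exact congrArg₂ Sum.elim (congrArg₂ Sum.elim (hinj _ _ (fun j ↦ hx _) (fun j ↦ hy _) h₁)
    (hinj _ _ (fun j ↦ hx _) (fun j ↦ hy _) h₂)) h₃

/-- If `A` is an `m × n` matrix with entries in `{-1,0,1}` that is injective on
binary vectors, then the block matrix `[[A, A, I], [A, -A, 0]]` is also injective on binary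
vectors. -/
theorem block_matrix_identification (m n : ℕ) (A : Matrix (Fin m) (Fin n) ℤ)
    (hent : ∀ i j, A i j = -1 ∨ A i j = 0 ∨ A i j = 1)
    (hinj : ∀ x y : Fin n → ℤ, (∀ j, x j = 0 ∨ x j = 1) → (∀ j, y j = 0 ∨ y j = 1) →
      A.mulVec x = A.mulVec y → x = y) :
    ∀ x y : (Fin n ⊕ Fin n) ⊕ Fin m → ℤ,
      (∀ j, x j = 0 ∨ x j = 1) → (∀ j, y j = 0 ∨ y j = 1) →
      (Matrix.fromBlocks (Matrix.fromCols A A) (1 : Matrix (Fin m) (Fin m) ℤ)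
        (Matrix.fromCols A (-A)) (0 : Matrix (Fin m) (Fin m) ℤ)).mulVec x =
      (Matrix.fromBlocks (Matrix.fromCols A A) (1 : Matrix (Fin m) (Fin m) ℤ)
        (Matrix.fromCols A (-A)) (0 : Matrix (Fin m) (Fin m) ℤ)).mulVec y →
      x = y :=
  block_matrix_identification_general m n A hinj
end

section
/- Let a, c : ℕ → ℕ be functions on powers of two satisfying a(m) ≤ 3m for all m, c(m) = 0 for m ≤ 2, and c(m) ≤ 2·max(c(m/4), a(m/2)) + c(m/2) for m > 2. Then c(m) ≤ 6m for all powers of two m. -/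
/-- The Solve recursion `c(m) ≤ 2·max(c(m/4), a(m/2)) + c(m/2)` (with
`a(m) ≤ 3m` and `c(m) = 0` for `m ≤ 2`) implies `c(m) ≤ 6m` for all powers of two `m`. -/
theorem solve_recursion (a c : ℕ → ℕ)
    (ha : ∀ m, a m ≤ 3 * m)
    (hbase : ∀ m, m ≤ 2 → c m = 0)
    (hrec : ∀ m, 2 < m → (∃ k, m = 2 ^ k) → c m ≤ 2 * max (c (m / 4)) (a (m / 2)) + c (m / 2)) :
    ∀ k : ℕ, c (2 ^ k) ≤ 6 * 2 ^ k := by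
  intro k
  induction k using Nat.strong_induction_on with
  | _ k ih =>
    match k, ih with
    | 0, _ => simp [hbase 1 (by norm_num)]
    | 1, _ => simp [hbase 2 (by norm_num)]
    | (n+2), ih =>
      have h2 : 2 < 2 ^ (n + 2) := by
        calc 2 < 4 := by norm_num
        _ ≤ 2 ^ (n+2) := by have := Nat.pow_le_pow_right (show 0 < 2 by norm_num) (show 2 ≤ n + 2 by omega); simpa using this
      have hdiv4 : 2 ^ (n + 2) / 4 = 2 ^ n := by
        rw [pow_succ, pow_succ]; omega
      have hdiv2 : 2 ^ (n + 2) / 2 = 2 ^ (n + 1) := by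
        rw [pow_succ]; omega
      have h := hrec (2 ^ (n+2)) h2 ⟨n+2, rfl⟩
      rw [hdiv4, hdiv2] at h
      have h1 := ih n (by omega)
      have h2' := ih (n+1) (by omega)
      have ha' := ha (2 ^ (n+1))
      have hmax : max (c (2 ^ n)) (a (2 ^ (n+1))) ≤ 3 * 2 ^ (n+1) := by
        apply max_le _ ha'
        calc c (2 ^ n) ≤ 6 * 2 ^ n := h1
        _ = 3 * 2 ^ (n+1) := by ring
      calc c (2 ^ (n+2)) ≤ 2 * (3 * 2 ^ (n+1)) + 6 * 2 ^ (n+1) := by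
            exact h.trans (by omega)
        _ = 6 * 2 ^ (n+2) := by ring
end

section
/- In black-peg Mastermind with n positions and k colors where the codeword is a permutation of [n] (requiring k ≥ n), given a string z with b_c(z) = 0, any signed query q ∈ {−n,...,n}^n can be simulated by two unsigned queries q⁺ and q⁻: q⁺ takes the value q_i where q_i > 0 and z_i elsewhere; q⁻ takes the value −q_i where q_i < 0 and z_i elsewhere. Then b_c(q⁺) − b_c(q⁻) equals the signed answer |{i : c_i = q_i}| − |{i : c_i = −q_i}|. -/
/-- Given a string `z` never matching the permutation codeword `c`, the two
unsigned queries `q⁺` and `q⁻` derived from a signed query `q` satisfy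
`b_c(q⁺) − b_c(q⁻) = |{i : c_i = q_i}| − |{i : c_i = −q_i}|`. -/
theorem simulate_signed_query (n k : ℕ) (hkn : n ≤ k) (c : Fin n → ℤ)
    (hc : ∀ i, 1 ≤ c i ∧ c i ≤ n) (hcinj : Function.Injective c)
    (z : Fin n → ℤ) (hz : ∀ i, 1 ≤ z i ∧ z i ≤ k)
    (hz0 : (Finset.univ.filter fun i => z i = c i).card = 0)
    (q : Fin n → ℤ) (hq : ∀ i, -(n : ℤ) ≤ q i ∧ q i ≤ n) :
    ((Finset.univ.filter fun i =>
        (if 0 < q i then q i else z i) = c i).card : ℤ) -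
      ((Finset.univ.filter fun i =>
        (if q i < 0 then -q i else z i) = c i).card : ℤ) =
    ((Finset.univ.filter fun i => c i = q i).card : ℤ) -
      ((Finset.univ.filter fun i => c i = -q i).card : ℤ) := by
  have hne : ∀ i, z i ≠ c i := by
    intro i hi
    have := Finset.card_eq_zero.mp hz0
    have : i ∈ (Finset.univ.filter fun i => z i = c i) := by
      simp [hi]
    rw [Finset.card_eq_zero.mp hz0] at this
    exact absurd this (Finset.notMem_empty i)
  have h1 : (Finset.univ.filter fun i => (if 0 < q i then q i else z i) = c i)
      = (Finset.univ.filter fun i => c i = q i) := by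
    apply Finset.filter_congr
    intro i _
    constructor
    · intro h
      by_cases hpos : 0 < q i
      · simp [hpos] at h; omega
      · simp [hpos] at h; exact absurd h (hne i)
    · intro h
      have : 0 < q i := by have := (hc i).1; omega
      simp [this]; omega
  have h2 : (Finset.univ.filter fun i => (if q i < 0 then -q i else z i) = c i)
      = (Finset.univ.filter fun i => c i = -q i) := by
    apply Finset.filter_congr
    intro i _
    constructor
    · intro h
      by_cases hneg : q i < 0
      · simp [hneg] at h; omega
      · simp [hneg] at h; exact absurd h (hne i)
    · intro h
      have : q i < 0 := by have := (hc i).1; omega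
      simp [this]; omega
  rw [h1, h2]
end

section
/- Let T(n) denote the minimum number of queries needed to solve black-peg Mastermind with n colors and n positions, and suppose T(n) = O(n). Then for any √n ≤ k ≤ n, black-peg Mastermind with k colors and n positions can be solved in O(n) queries: first find z ∈ [k]^n with b_c(z) = 0 in n+1 queries, then simulate the n-color strategy by replacing any color > k in a query by the corresponding entry of z; the simulated answers are correct since c ∈ [k]^n. -/
/-- Black-peg count. -/
def blackPegs {n k : ℕ} (c q : Fin n → Fin k) : ℕ :=
  (Finset.univ.filter fun i => q i = c i).card

/-- The answer transcript of an adaptive strategy played against codeword `c` after `t`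
queries. -/
def transcript {n k : ℕ} (strat : List ℕ → (Fin n → Fin k)) (c : Fin n → Fin k) :
    ℕ → List ℕ
  | 0 => []
  | t + 1 =>
    transcript strat c t ++ [blackPegs c (strat (transcript strat c t))]

/-!
Take two colors `a ≠ b`. The `n + 1` probes "all `a`" and "all `a` except `b` at position `j`"
reveal exactly the positions where the codeword `c` equals `a` (there the second probe loses a
black peg), hence a word `z` with `z i ≠ c i` for every `i`. An `n`-color strategy is then played
with every color `≥ k` in its queries replaced by the corresponding entry of `z`: since `c` uses
only colors `< k`, this does not change any answer, so after `n + 1 + O(n)` queries the transcript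
determines `c`. For `k = 1` there is only one codeword.
-/

section Transcript

variable {n k : ℕ}

theorem transcript_length (s : List ℕ → (Fin n → Fin k)) (c : Fin n → Fin k) (t : ℕ) :
    (transcript s c t).length = t := by
  induction t with
  | zero => rfl
  | succ t ih => simp [transcript, ih]

theorem transcript_congr {k' : ℕ} {s : List ℕ → (Fin n → Fin k)} {s' : List ℕ → (Fin n → Fin k')}
    {c : Fin n → Fin k} {c' : Fin n → Fin k'} (h : ∀ l, blackPegs c (s l) = blackPegs c' (s' l))
    (t : ℕ) : transcript s c t = transcript s' c' t := by
  induction t with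
  | zero => rfl
  | succ t ih => simp only [transcript, ih, h]

theorem transcript_nonadaptive (q : ℕ → Fin n → Fin k) (c : Fin n → Fin k) (t : ℕ) :
    transcript (fun l => q l.length) c t = (List.range t).map fun s => blackPegs c (q s) := by
  induction t with
  | zero => rfl
  | succ t ih => simp [transcript, ih, List.range_succ]

def seqStrategy (m : ℕ) (s₁ : List ℕ → (Fin n → Fin k))
    (s₂ : List ℕ → List ℕ → (Fin n → Fin k)) : List ℕ → (Fin n → Fin k) :=
  fun l => if l.length < m then s₁ l else s₂ (l.take m) (l.drop m)

theorem transcript_seqStrategy_of_le {m t : ℕ} (s₁ : List ℕ → (Fin n → Fin k))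
    (s₂ : List ℕ → List ℕ → (Fin n → Fin k)) (c : Fin n → Fin k) (ht : t ≤ m) :
    transcript (seqStrategy m s₁ s₂) c t = transcript s₁ c t := by
  induction t with
  | zero => rfl
  | succ t ih =>
    have hlt : (transcript s₁ c t).length < m := by rw [transcript_length]; omega
    simp only [transcript, ih (by omega), seqStrategy, if_pos hlt]

theorem transcript_seqStrategy (m : ℕ) (s₁ : List ℕ → (Fin n → Fin k))
    (s₂ : List ℕ → List ℕ → (Fin n → Fin k)) (c : Fin n → Fin k) (t : ℕ) :
    transcript (seqStrategy m s₁ s₂) c (m + t) =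
      transcript s₁ c m ++ transcript (s₂ (transcript s₁ c m)) c t := by
  induction t with
  | zero => exact (transcript_seqStrategy_of_le s₁ s₂ c le_rfl).trans (List.append_nil _).symm
  | succ t ih =>
    have hm : (transcript s₁ c m).length = m := transcript_length s₁ c m
    have hnext : seqStrategy m s₁ s₂ (transcript s₁ c m ++ transcript (s₂ (transcript s₁ c m)) c t)
        = s₂ (transcript s₁ c m) (transcript (s₂ (transcript s₁ c m)) c t) := by
      simp [seqStrategy, hm, List.take_left', List.drop_left']
    rw [← add_assoc, transcript, ih, hnext, transcript, List.append_assoc]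

end Transcript

section Probes

variable {n k : ℕ}

theorem blackPegs_eq_sum (c q : Fin n → Fin k) :
    blackPegs c q = ∑ i, if q i = c i then 1 else 0 :=
  Finset.card_filter _ _

theorem blackPegs_update_add (c q : Fin n → Fin k) (j : Fin n) (a : Fin k) :
    blackPegs c (Function.update q j a) + (if q j = c j then 1 else 0) =
      blackPegs c q + (if a = c j then 1 else 0) := by
  have hrest : ∀ i ∈ Finset.univ.erase j,
      (if Function.update q j a i = c i then 1 else 0) = if q i = c i then 1 else 0 := by
    intro i hi
    rw [Function.update_of_ne (Finset.ne_of_mem_erase hi)]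
  rw [blackPegs_eq_sum, blackPegs_eq_sum, ← Finset.add_sum_erase _ _ (Finset.mem_univ j),
    ← Finset.add_sum_erase _ (fun i => if q i = c i then 1 else 0) (Finset.mem_univ j),
    Finset.sum_congr rfl hrest, Function.update_self]
  ring

def probe (a b : Fin k) (s : ℕ) : Fin n → Fin k :=
  fun i => if (i : ℕ) + 1 = s then b else a

theorem probe_zero (a b : Fin k) : (probe a b 0 : Fin n → Fin k) = fun _ => a := by
  funext i
  simp [probe]

theorem probe_succ (a b : Fin k) (j : Fin n) :
    probe a b ((j : ℕ) + 1) = Function.update (fun _ => a) j b := by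
  funext i
  simp [probe, Function.update_apply, Fin.val_inj]

theorem blackPegs_probe_succ_lt_iff {a b : Fin k} (hab : a ≠ b) (c : Fin n → Fin k) (j : Fin n) :
    blackPegs c (probe a b ((j : ℕ) + 1)) < blackPegs c (probe a b 0) ↔ c j = a := by
  have h := blackPegs_update_add c (fun _ => a) j b
  rw [← probe_succ, ← probe_zero a b] at h
  by_cases hca : c j = a
  · simp only [hca, if_true, hab.symm, if_false] at h
    simp only [hca, iff_true]
    omega
  · simp only [Ne.symm hca, if_false] at h
    simp only [hca, iff_false, not_lt]
    split_ifs at h <;> omega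

def avoidingWord (a b : Fin k) (answers : List ℕ) : Fin n → Fin k :=
  fun i => if answers.getD ((i : ℕ) + 1) 0 < answers.getD 0 0 then b else a

theorem getD_map_range {m s : ℕ} (f : ℕ → ℕ) (hs : s < m) :
    ((List.range m).map f).getD s 0 = f s := by
  rw [List.getD_eq_getElem _ _ (by simpa using hs)]
  simp

theorem avoidingWord_ne {a b : Fin k} (hab : a ≠ b) (c : Fin n → Fin k) (i : Fin n) :
    avoidingWord a b ((List.range (n + 1)).map fun s => blackPegs c (probe a b s)) i ≠ c i := by
  simp only [avoidingWord, getD_map_range _ (Nat.succ_lt_succ i.isLt),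
    getD_map_range _ (Nat.succ_pos n), blackPegs_probe_succ_lt_iff hab]
  split_ifs with hca
  · exact fun hbc => hab (hca.symm.trans hbc.symm)
  · exact fun hac => hca hac.symm

end Probes

section Simulation

variable {n k m : ℕ}

def simulate (z : Fin n → Fin k) (Q : Fin n → Fin m) : Fin n → Fin k :=
  fun i => if h : (Q i : ℕ) < k then ⟨Q i, h⟩ else z i

-- Since `c` only uses colors `< k`, a replaced position matches neither before nor after.
theorem blackPegs_simulate (hkm : k ≤ m) {c z : Fin n → Fin k} (hz : ∀ i, z i ≠ c i)
    (Q : Fin n → Fin m) : blackPegs c (simulate z Q) = blackPegs (Fin.castLE hkm ∘ c) Q := by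
  unfold blackPegs
  congr 1
  refine Finset.filter_congr fun i _ => ?_
  by_cases hq : (Q i : ℕ) < k
  · simp [simulate, hq, Fin.ext_iff]
  · simp only [simulate, hq, dif_neg, not_false_iff, hz i, false_iff]
    intro h
    exact hq (h ▸ (c i).isLt)

def reductionStrategy (a b : Fin k) (s : List ℕ → (Fin n → Fin m)) : List ℕ → (Fin n → Fin k) :=
  seqStrategy (n + 1) (fun l => probe a b l.length)
    fun answers rest => simulate (avoidingWord a b answers) (s rest)

theorem transcript_reductionStrategy (hkm : k ≤ m) {a b : Fin k} (hab : a ≠ b)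
    (s : List ℕ → (Fin n → Fin m)) (c : Fin n → Fin k) (t : ℕ) :
    transcript (reductionStrategy a b s) c (n + 1 + t) =
      (List.range (n + 1)).map (fun j => blackPegs c (probe a b j)) ++
        transcript s (Fin.castLE hkm ∘ c) t := by
  rw [reductionStrategy, transcript_seqStrategy, transcript_nonadaptive]
  exact congrArg _ (transcript_congr (fun l => blackPegs_simulate hkm (avoidingWord_ne hab c) _) t)

theorem injective_transcript_reductionStrategy (hkm : k ≤ m) {a b : Fin k} (hab : a ≠ b)
    {s : List ℕ → (Fin n → Fin m)} {T : ℕ}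
    (hs : Function.Injective fun c : Fin n → Fin m => transcript s c T) :
    Function.Injective fun c : Fin n → Fin k =>
      transcript (reductionStrategy a b s) c (n + 1 + T) := by
  intro c d hcd
  simp only [transcript_reductionStrategy hkm hab] at hcd
  have hsim := (List.append_inj hcd (by simp)).2
  funext i
  exact Fin.castLE_injective hkm (congrFun (hs hsim) i)

end Simulation

/-- If black-peg Mastermind with `n` colors and `n` positions is solvable in
`O(n)` queries, then for any `√n ≤ k ≤ n`, black-peg Mastermind with `k` colors and `n`
positions is solvable in `O(n)` queries. -/
theorem intermediate_colors_linear (C : ℕ)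
    (hsolve : ∀ n : ℕ, 1 ≤ n → ∃ strat : List ℕ → (Fin n → Fin n), ∃ T : ℕ,
      T ≤ C * n ∧ Function.Injective fun c : Fin n → Fin n => transcript strat c T) :
    ∃ C' : ℕ, ∀ n k : ℕ, 1 ≤ k → Real.sqrt n ≤ k → k ≤ n →
      ∃ strat : List ℕ → (Fin n → Fin k), ∃ T : ℕ,
        T ≤ C' * n ∧ Function.Injective fun c : Fin n → Fin k => transcript strat c T := by
  refine ⟨C + 2, fun n k hk _ hkn => ?_⟩
  obtain rfl | hk2 : k = 1 ∨ 2 ≤ k := by omega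
  · exact ⟨fun _ _ => 0, 0, Nat.zero_le _, Function.injective_of_subsingleton _⟩
  obtain ⟨s, T, hT, hs⟩ := hsolve n (by omega)
  refine ⟨reductionStrategy ⟨0, by omega⟩ ⟨1, hk2⟩ s, n + 1 + T, by nlinarith,
    injective_transcript_reductionStrategy hkn (by simp [Fin.ext_iff]) hs⟩
end
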